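/- arXiv:2406.03058 — 4 statements merged into one kernel-verified Lean document; each statement's English description precedes it below -/
import Mathlib

section
/- Let f : ℝ → ℝ be differentiable with bounded derivative, and suppose there exists L > 0 such that for all u, z ∈ L²(𝕋) one has ‖f'(u)·z‖_{H^{-2}(𝕋)} ≤ L ‖z‖_{H^{-2}(𝕋)}, where f'(u)·z denotes the pointwise product x ↦ f'(u(x)) z(x). Then f' is constant, i.e., f is affine linear. -/
/-!
Fix `r, s` and `n ≠ 0`, let `z = Re eₙ = cos (2πn·)` and let `u` equal `r` where `z ≥ 0` and `s`
elsewhere. Then `f'(u) z = f'(s) z + (f'(r) - f'(s)) z⁺` has mean `(f'(r) - f'(s)) ∫ cos⁺ (2π·)`,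
which does not depend on `n` because `x ↦ n • x` preserves Haar measure on `𝕋`. The square of the
mean is the `k = 0` term of `‖f'(u) z‖²_{H⁻²}`, whereas `‖z‖²_{H⁻²} = (1 + n²)⁻² / 2 → 0`.
Hence `f'(r) = f'(s)`.
-/

open MeasureTheory

/-- The squared `H^{-2}(𝕋)` norm of a real function on the torus `𝕋 = ℝ/ℤ`,
defined via Fourier coefficients: `∑_{k ∈ ℤ} (1+k²)^{-2} |v̂(k)|²`. -/
noncomputable def Hm2Sq (g : AddCircle (1 : ℝ) → ℝ) : ℝ :=
  ∑' k : ℤ, (1 + (k : ℝ) ^ 2) ^ (-2 : ℝ) * ‖fourierCoeff (fun x => (g x : ℂ)) k‖ ^ 2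

open AddCircle Filter Topology

local notation "𝕋" => AddCircle (1 : ℝ)

section Fourier

variable {T : ℝ} [Fact (0 < T)]

lemma Continuous.memLp_haarAddCircle {E : Type*} [NormedAddCommGroup E] {g : AddCircle T → E}
    (hg : Continuous g) (p : ENNReal) : MemLp g p haarAddCircle :=
  (hg.memLp_top_of_hasCompactSupport (.of_compactSpace g) _).mono_exponent le_top

lemma Continuous.integrable_haarAddCircle {E : Type*} [NormedAddCommGroup E]
    {g : AddCircle T → E} (hg : Continuous g) : Integrable g haarAddCircle :=
  hg.integrable_of_hasCompactSupport (.of_compactSpace g)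

lemma fourierCoeff_ofReal_zero (g : AddCircle T → ℝ) :
    fourierCoeff (fun x => (g x : ℂ)) 0 = ∫ x, g x ∂haarAddCircle := by
  simp only [fourierCoeff, neg_zero, fourier_zero, one_smul]
  exact integral_ofReal

lemma fourierCoeff_re_fourier (n k : ℤ) :
    fourierCoeff (fun x : AddCircle T => ((fourier n x).re : ℂ)) k
      = ((Pi.single n 1 : ℤ → ℂ) k + (Pi.single (-n) 1 : ℤ → ℂ) k) / 2 := by
  have hre : (fun x : AddCircle T => ((fourier n x).re : ℂ))
      = fun x => (2 : ℂ)⁻¹ * (⇑(fourier (T := T) n) + ⇑(fourier (T := T) (-n))) x := by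
    ext x
    rw [Pi.add_apply, fourier_neg, Complex.add_conj]
    push_cast
    ring
  rw [hre, fourierCoeff.const_mul, fourierCoeff.add (fourier n).continuous.integrable_haarAddCircle
    (fourier (-n)).continuous.integrable_haarAddCircle, fourierCoeff_fourier,
    fourierCoeff_fourier]
  simp only [Pi.add_apply]
  ring

lemma integral_re_fourier {n : ℤ} (hn : n ≠ 0) :
    ∫ x : AddCircle T, (fourier n x).re ∂haarAddCircle = 0 := by
  have h := fourierCoeff_re_fourier (T := T) n 0
  rw [fourierCoeff_ofReal_zero, Pi.single_eq_of_ne hn.symm,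
    Pi.single_eq_of_ne (neg_ne_zero.2 hn).symm] at h
  exact_mod_cast h.trans (by norm_num : ((0 : ℂ) + 0) / 2 = 0)

lemma integral_comp_zsmul {E : Type*} [NormedAddCommGroup E] [NormedSpace ℝ E] {n : ℤ}
    (hn : n ≠ 0) {g : AddCircle T → E} (hg : AEStronglyMeasurable g haarAddCircle) :
    ∫ x, g (n • x) ∂haarAddCircle = ∫ x, g x ∂haarAddCircle := by
  have hmp := Measure.measurePreserving_zsmul (haarAddCircle : Measure (AddCircle T)) hn
  rw [← integral_map hmp.measurable.aemeasurable (by rwa [hmp.map_eq]), hmp.map_eq]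

lemma integral_posPart_re_fourier {n : ℤ} (hn : n ≠ 0) :
    ∫ x : AddCircle T, max (fourier n x).re 0 ∂haarAddCircle
      = ∫ x : AddCircle T, max (fourier 1 x).re 0 ∂haarAddCircle := by
  have hcont : Continuous fun x : AddCircle T => max (fourier 1 x).re 0 := by fun_prop
  have hscale (x : AddCircle T) : fourier n x = fourier 1 (n • x) := by
    rw [fourier_apply, fourier_apply, one_zsmul]
  simp only [hscale]
  exact integral_comp_zsmul hn hcont.aestronglyMeasurable

lemma integral_posPart_re_fourier_one_pos :
    0 < ∫ x : AddCircle T, max (fourier 1 x).re 0 ∂haarAddCircle :=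
  Continuous.integral_pos_of_hasCompactSupport_nonneg_nonzero (x := 0) (by fun_prop)
    (.of_compactSpace _) (fun _ => le_max_right _ _) (by simp)

lemma summable_sq_norm_fourierCoeff_ofReal {g : AddCircle T → ℝ} (hg : MemLp g 2 haarAddCircle) :
    Summable fun k : ℤ => ‖fourierCoeff (fun x => (g x : ℂ)) k‖ ^ 2 := by
  have hgℂ := hg.ofReal (K := ℂ)
  have := (hasSum_sq_fourierCoeff hgℂ.toLp).summable
  rwa [fourierCoeff_congr_ae hgℂ.coeFn_toLp] at this

end Fourier

lemma summable_Hm2Sq {g : 𝕋 → ℝ} (hg : MemLp g 2 haarAddCircle) :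
    Summable fun k : ℤ =>
      (1 + (k : ℝ) ^ 2) ^ (-2 : ℝ) * ‖fourierCoeff (fun x => (g x : ℂ)) k‖ ^ 2 :=
  (summable_sq_norm_fourierCoeff_ofReal hg).of_nonneg_of_le (fun _ => by positivity) fun k =>
    mul_le_of_le_one_left (by positivity)
      (Real.rpow_le_one_of_one_le_of_nonpos (by nlinarith [sq_nonneg (k : ℝ)]) (by norm_num))

lemma sq_integral_le_Hm2Sq {g : 𝕋 → ℝ} (hg : MemLp g 2 haarAddCircle) :
    (∫ x, g x ∂haarAddCircle) ^ 2 ≤ Hm2Sq g := by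
  have h := (summable_Hm2Sq hg).le_tsum 0 fun k _ => by positivity
  rwa [fourierCoeff_ofReal_zero, Complex.norm_real, Real.norm_eq_abs, sq_abs, Int.cast_zero,
    zero_pow two_ne_zero, add_zero, Real.one_rpow, one_mul] at h

lemma Hm2Sq_re_fourier {n : ℤ} (hn : n ≠ 0) :
    Hm2Sq (fun x => (fourier n x).re) = (1 + (n : ℝ) ^ 2) ^ (-2 : ℝ) / 2 := by
  have hn' : n ≠ -n := by omega
  have hcoeff (k : ℤ) : ‖fourierCoeff (fun x : 𝕋 => ((fourier n x).re : ℂ)) k‖ ^ 2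
      = if k = n ∨ k = -n then 1 / 4 else 0 := by
    rw [fourierCoeff_re_fourier, Pi.single_apply, Pi.single_apply]
    rcases eq_or_ne k n with rfl | h₁
    · norm_num [hn']
    rcases eq_or_ne k (-n) with rfl | h₂
    · norm_num [hn'.symm]
    · simp [h₁, h₂]
  unfold Hm2Sq
  rw [tsum_eq_sum (s := {n, -n}) fun k hk => ?_, Finset.sum_pair hn', hcoeff, hcoeff]
  · simp only [true_or, or_true, if_true, Int.cast_neg, neg_sq]
    ring
  · simp only [Finset.mem_insert, Finset.mem_singleton] at hk
    rw [hcoeff, if_neg hk, mul_zero]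

lemma sq_mul_integral_posPart_le_Hm2Sq (a b : ℝ) {n : ℤ} (hn : n ≠ 0) :
    ((a - b) * ∫ x : 𝕋, max (fourier 1 x).re 0 ∂haarAddCircle) ^ 2 ≤
      Hm2Sq fun x => (if 0 ≤ (fourier n x).re then a else b) * (fourier n x).re := by
  set z : 𝕋 → ℝ := fun x => (fourier n x).re
  have hsplit : (fun x => (if 0 ≤ z x then a else b) * z x)
      = fun x => b * z x + (a - b) * max (z x) 0 := by
    ext x
    split_ifs with hx
    · rw [max_eq_left hx]; ring
    · rw [max_eq_right (le_of_not_ge hx)]; ring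
  have hmean : ∫ x, b * z x + (a - b) * max (z x) 0 ∂haarAddCircle
      = (a - b) * ∫ x : 𝕋, max (fourier 1 x).re 0 ∂haarAddCircle := by
    rw [integral_add (Continuous.integrable_haarAddCircle (by fun_prop))
      (Continuous.integrable_haarAddCircle (by fun_prop)), integral_const_mul,
      integral_const_mul, integral_re_fourier hn, integral_posPart_re_fourier hn]
    ring
  rw [hsplit, ← hmean]
  exact sq_integral_le_Hm2Sq ((by fun_prop : Continuous _).memLp_haarAddCircle 2)

lemma tendsto_one_add_sq_rpow_neg_two :
    Tendsto (fun n : ℕ => (1 + (n : ℝ) ^ 2) ^ (-2 : ℝ)) atTop (𝓝 0) :=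
  (tendsto_rpow_neg_atTop two_pos).comp <| tendsto_atTop_add_const_left _ 1 <|
    (tendsto_pow_atTop two_ne_zero).comp tendsto_natCast_atTop_atTop

theorem eq_of_forall_Hm2Sq_mul_le {φ : ℝ → ℝ} {L : ℝ}
    (h : ∀ u z : 𝕋 → ℝ, MemLp u 2 haarAddCircle → MemLp z 2 haarAddCircle →
      Hm2Sq (fun x => φ (u x) * z x) ≤ L ^ 2 * Hm2Sq z)
    (r s : ℝ) : φ r = φ s := by
  set c := ∫ x : 𝕋, max (fourier 1 x).re 0 ∂haarAddCircle
  have hbound : ∀ n : ℕ, n ≠ 0 →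
      ((φ r - φ s) * c) ^ 2 ≤ L ^ 2 * ((1 + (n : ℝ) ^ 2) ^ (-2 : ℝ) / 2) := by
    intro n hn
    have hn : (n : ℤ) ≠ 0 := Int.natCast_ne_zero.2 hn
    have hz : Continuous fun x : 𝕋 => (fourier (n : ℤ) x).re := by fun_prop
    set u : 𝕋 → ℝ := fun x => if 0 ≤ (fourier (n : ℤ) x).re then r else s
    have hu : MemLp u 2 haarAddCircle := by
      refine .of_bound ?_ (max |r| |s|) (.of_forall fun x => ?_)
      · exact (Measurable.ite (measurableSet_le measurable_const hz.measurable) measurable_const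
          measurable_const).aestronglyMeasurable
      · simp only [u]; split_ifs <;> simp
    calc ((φ r - φ s) * c) ^ 2 ≤ Hm2Sq fun x => φ (u x) * (fourier (n : ℤ) x).re := by
          simpa only [u, apply_ite φ] using sq_mul_integral_posPart_le_Hm2Sq (φ r) (φ s) hn
      _ ≤ L ^ 2 * Hm2Sq fun x => (fourier (n : ℤ) x).re := h _ _ hu (hz.memLp_haarAddCircle 2)
      _ = _ := by rw [Hm2Sq_re_fourier hn, Int.cast_natCast]
  have hlim : Tendsto (fun n : ℕ => L ^ 2 * ((1 + (n : ℝ) ^ 2) ^ (-2 : ℝ) / 2)) atTop (𝓝 0) := by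
    simpa using (tendsto_one_add_sq_rpow_neg_two.div_const 2).const_mul (L ^ 2)
  have hsq : ((φ r - φ s) * c) ^ 2 = 0 :=
    le_antisymm (ge_of_tendsto hlim ((eventually_ne_atTop 0).mono hbound)) (sq_nonneg _)
  have hc : c ≠ 0 := integral_posPart_re_fourier_one_pos.ne'
  simpa [hc, sub_eq_zero] using hsq

theorem exists_eq_mul_add_of_deriv_eq {f : ℝ → ℝ} (hf : Differentiable ℝ f)
    (hconst : ∀ x y, deriv f x = deriv f y) : ∃ a b : ℝ, ∀ x, f x = a * x + b := by
  refine ⟨deriv f 0, f 0, fun x => ?_⟩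
  have hderiv (y : ℝ) : HasDerivAt (fun x => f x - deriv f 0 * x) 0 y := by
    simpa [hconst y 0] using (hf y).hasDerivAt.fun_sub ((hasDerivAt_id y).const_mul (deriv f 0))
  have := is_const_of_deriv_eq_zero (hf.sub (differentiable_id.const_mul _))
    (fun y => (hderiv y).deriv) x 0
  simp only [Pi.sub_apply, mul_zero, sub_zero] at this
  linarith

theorem stmt5_general (f : ℝ → ℝ) (hf : Differentiable ℝ f)
    (L : ℝ)
    (h : ∀ u z : AddCircle (1 : ℝ) → ℝ,
      MemLp u 2 AddCircle.haarAddCircle → MemLp z 2 AddCircle.haarAddCircle →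
      Hm2Sq (fun x => deriv f (u x) * z x) ≤ L ^ 2 * Hm2Sq z) :
    ∃ a b : ℝ, ∀ x, f x = a * x + b :=
  exists_eq_mul_add_of_deriv_eq hf (eq_of_forall_Hm2Sq_mul_le h)

theorem stmt5 (f : ℝ → ℝ) (hf : Differentiable ℝ f)
    (B : ℝ) (hB : ∀ x, |deriv f x| ≤ B)
    (L : ℝ) (hL : 0 < L)
    (h : ∀ u z : AddCircle (1 : ℝ) → ℝ,
      MemLp u 2 AddCircle.haarAddCircle → MemLp z 2 AddCircle.haarAddCircle →
      Hm2Sq (fun x => deriv f (u x) * z x) ≤ L ^ 2 * Hm2Sq z) :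
    ∃ a b : ℝ, ∀ x, f x = a * x + b :=
  stmt5_general f hf L h
end

section
/- Let f : ℝ → ℝ be C¹ satisfying |f(x)| ≤ K(1 + |x|^{2m+1}) and the one-sided bound (f(a) − f(b))(a − b) ≤ K(a − b)² for all a, b ∈ ℝ, with K ≥ 1. Let Φ_t(z) be the flow of ∂ₜΦ = f(Φ), Φ_0(z) = z. Then for all h ∈ [0,1] and z ∈ ℝ, sup_{s∈[0,h]} |Φ_s(z)| ≤ K e^{(2K+1)h/2}(1 + |z|). -/
/-! The one-sided Lipschitz bound tested against `b = 0`, together with `|f 0| ≤ K` and Young's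
inequality, gives `2 u f(u) ≤ (2K+1) u² + K²`. Hence `Φ_s(z)²` satisfies a linear differential
inequality, and Grönwall's inequality bounds it by `K² e^{(2K+1)h} (1 + |z|)²` on `[0, h]`. -/

open Real Set

lemma two_mul_mul_le_of_one_sided_lipschitz {f : ℝ → ℝ} {K : ℝ}
    (hone : ∀ a b : ℝ, (f a - f b) * (a - b) ≤ K * (a - b) ^ 2) (hf0 : |f 0| ≤ K) (u : ℝ) :
    2 * u * f u ≤ (2 * K + 1) * u ^ 2 + K ^ 2 := by
  have hlip : (f u - f 0) * u ≤ K * u ^ 2 := by simpa using hone u 0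
  have hf0u : f 0 * u ≤ K * |u| := by
    calc f 0 * u ≤ |f 0| * |u| := by rw [← abs_mul]; exact le_abs_self _
      _ ≤ K * |u| := by gcongr
  have young : 2 * K * |u| ≤ u ^ 2 + K ^ 2 := by nlinarith [sq_nonneg (|u| - K), sq_abs u]
  nlinarith

lemma sq_le_gronwallBound_of_hasDerivAt {φ g : ℝ → ℝ} {A B a b : ℝ}
    (hφ : ∀ t ∈ Icc a b, HasDerivAt φ (g (φ t)) t)
    (hg : ∀ u, 2 * u * g u ≤ A * u ^ 2 + B) :
    ∀ s ∈ Icc a b, φ s ^ 2 ≤ gronwallBound (φ a ^ 2) A B (s - a) := by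
  have hsq : ∀ t ∈ Icc a b, HasDerivAt (fun s => φ s ^ 2) (2 * φ t * g (φ t)) t := fun t ht => by
    simpa [mul_comm, mul_left_comm] using (hφ t ht).fun_pow 2
  refine le_gronwallBound_of_liminf_deriv_right_le
    (fun t ht => (hsq t ht).continuousAt.continuousWithinAt) (fun t ht r hr => ?_) le_rfl
    (fun t _ => hg (φ t))
  exact (hsq t (Ico_subset_Icc_self ht)).hasDerivWithinAt.liminf_right_slope_le hr

lemma gronwallBound_le_mul_exp {δ A B : ℝ} (hA : 0 < A) (hB : 0 ≤ B) (x : ℝ) :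
    gronwallBound δ A B x ≤ (δ + B / A) * exp (A * x) := by
  rw [gronwallBound_of_K_ne_0 hA.ne']
  have : 0 ≤ B / A := div_nonneg hB hA.le
  nlinarith

theorem stmt7_general (f : ℝ → ℝ)
    (K : ℝ) (m : ℕ) (hK : 1 ≤ K)
    (hgrow : ∀ x, |f x| ≤ K * (1 + |x| ^ (2 * m + 1)))
    (hone : ∀ a b : ℝ, (f a - f b) * (a - b) ≤ K * (a - b) ^ 2)
    (Φ : ℝ → ℝ → ℝ) (hΦ0 : ∀ z, Φ 0 z = z)
    (hflow : ∀ z, ∀ t ∈ Set.Icc (0 : ℝ) 1, HasDerivAt (fun s => Φ s z) (f (Φ t z)) t)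
    (h : ℝ) (hh : h ∈ Set.Icc (0 : ℝ) 1) (z : ℝ) :
    ∀ s ∈ Set.Icc (0 : ℝ) h, |Φ s z| ≤ K * Real.exp ((2 * K + 1) * h / 2) * (1 + |z|) := by
  intro s hs
  have hf0 : |f 0| ≤ K := by simpa using hgrow 0
  have hflow_h : ∀ t ∈ Icc 0 h, HasDerivAt (fun s => Φ s z) (f (Φ t z)) t :=
    fun t ht => hflow z t ⟨ht.1, ht.2.trans hh.2⟩
  have hinit : z ^ 2 + K ^ 2 / (2 * K + 1) ≤ (K * (1 + |z|)) ^ 2 := by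
    have : K ^ 2 / (2 * K + 1) ≤ K ^ 2 := div_le_self (sq_nonneg K) (by linarith)
    have hK2 : 1 ≤ K ^ 2 := by nlinarith
    nlinarith [sq_abs z, abs_nonneg z, mul_nonneg (sub_nonneg.2 hK2) (sq_nonneg z),
      mul_nonneg (sq_nonneg K) (abs_nonneg z)]
  have hsq : Φ s z ^ 2 ≤ (K * exp ((2 * K + 1) * h / 2) * (1 + |z|)) ^ 2 :=
    calc Φ s z ^ 2 ≤ gronwallBound (z ^ 2) (2 * K + 1) (K ^ 2) s := by
          simpa [hΦ0] using sq_le_gronwallBound_of_hasDerivAt hflow_h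
            (two_mul_mul_le_of_one_sided_lipschitz hone hf0) s hs
      _ ≤ gronwallBound (z ^ 2) (2 * K + 1) (K ^ 2) h :=
          gronwallBound_mono (sq_nonneg z) (sq_nonneg K) (by linarith) hs.2
      _ ≤ (z ^ 2 + K ^ 2 / (2 * K + 1)) * exp ((2 * K + 1) * h) :=
          gronwallBound_le_mul_exp (by linarith) (sq_nonneg K) h
      _ ≤ (K * (1 + |z|)) ^ 2 * exp ((2 * K + 1) * h) := by gcongr
      _ = (K * exp ((2 * K + 1) * h / 2) * (1 + |z|)) ^ 2 := by
          rw [← add_halves ((2 * K + 1) * h), exp_add, add_halves]; ring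
  exact abs_le_of_sq_le_sq hsq (by positivity)

theorem stmt7 (f : ℝ → ℝ) (hf : ContDiff ℝ 1 f)
    (K : ℝ) (m : ℕ) (hK : 1 ≤ K)
    (hgrow : ∀ x, |f x| ≤ K * (1 + |x| ^ (2 * m + 1)))
    (hone : ∀ a b : ℝ, (f a - f b) * (a - b) ≤ K * (a - b) ^ 2)
    (Φ : ℝ → ℝ → ℝ) (hΦ0 : ∀ z, Φ 0 z = z)
    (hflow : ∀ z, ∀ t ∈ Set.Icc (0 : ℝ) 1, HasDerivAt (fun s => Φ s z) (f (Φ t z)) t)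
    (h : ℝ) (hh : h ∈ Set.Icc (0 : ℝ) 1) (z : ℝ) :
    ∀ s ∈ Set.Icc (0 : ℝ) h, |Φ s z| ≤ K * Real.exp ((2 * K + 1) * h / 2) * (1 + |z|) :=
  stmt7_general f K m hK hgrow hone Φ hΦ0 hflow h hh z
end

section
/- Let f : ℝ → ℝ satisfy |f(x)| ≤ K(1+|x|^{2m+1}) and |f'(x)| ≤ K(1+|x|^{2m}) for all x, with K ≥ 1, and let Φ, g_h be as above with the flow satisfying sup_{s∈[0,h]}|Φ_s(z)| ≤ Ke^{(2K+1)h/2}(1+|z|). Then there exists a constant C = C(K,m) such that for all h ∈ [0,1] and z ∈ ℝ, |g_h(z) − f(z)| ≤ C h (1 + |z|^{4m+2}). -/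
/-- `g_h(z) = (Φ_h(z) - z)/h` for `h > 0`, with `g_0 := f`. -/
noncomputable def gFun (f : ℝ → ℝ) (Φ : ℝ → ℝ → ℝ) (h z : ℝ) : ℝ :=
  if h = 0 then f z else (Φ h z - z) / h

private lemma one_add_pow_le (x : ℝ) (hx : 0 ≤ x) (n : ℕ) :
    (1 + x) ^ n ≤ 2 ^ n * (1 + x ^ n) := by
  rcases le_total x 1 with hx1 | hx1
  · have h1 : (1 + x) ^ n ≤ 2 ^ n := pow_le_pow_left₀ (by linarith) (by linarith) n
    have h2 : (0:ℝ) ≤ x ^ n := pow_nonneg hx n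
    nlinarith [pow_pos (show (0:ℝ) < 2 by norm_num) n]
  · have h1 : (1 + x) ^ n ≤ (2 * x) ^ n := pow_le_pow_left₀ (by linarith) (by linarith) n
    have h2 : (0:ℝ) < x ^ n := pow_pos (by linarith) n
    calc (1 + x) ^ n ≤ (2 * x) ^ n := h1
      _ = 2 ^ n * x ^ n := by rw [mul_pow]
      _ ≤ 2 ^ n * (1 + x ^ n) := by
          have : (0:ℝ) < 2 ^ n := pow_pos (by norm_num) n
          nlinarith

set_option maxHeartbeats 1000000 in
theorem stmt9 (f : ℝ → ℝ) (hf : Differentiable ℝ f)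
    (K : ℝ) (m : ℕ) (hK : 1 ≤ K)
    (hgrow : ∀ x, |f x| ≤ K * (1 + |x| ^ (2 * m + 1)))
    (hgrow' : ∀ x, |deriv f x| ≤ K * (1 + |x| ^ (2 * m)))
    (Φ : ℝ → ℝ → ℝ) (hΦ0 : ∀ z, Φ 0 z = z)
    (hflow : ∀ z, ∀ t ∈ Set.Icc (0 : ℝ) 1, HasDerivAt (fun s => Φ s z) (f (Φ t z)) t)
    (hΦgrow : ∀ h ∈ Set.Icc (0 : ℝ) 1, ∀ z, ∀ s ∈ Set.Icc (0 : ℝ) h,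
      |Φ s z| ≤ K * Real.exp ((2 * K + 1) * h / 2) * (1 + |z|)) :
    ∃ C : ℝ, 0 < C ∧ ∀ h ∈ Set.Icc (0 : ℝ) 1, ∀ z : ℝ,
      |gFun f Φ h z - f z| ≤ C * h * (1 + |z| ^ (4 * m + 2)) := by
  classical
  set A : ℝ := K * Real.exp ((2 * K + 1) / 2) with hAdef
  have hexp1 : (1:ℝ) ≤ Real.exp ((2 * K + 1) / 2) :=
    Real.one_le_exp (by nlinarith)
  have hA1 : 1 ≤ A := by nlinarith
  have hA0 : 0 < A := by linarith
  clear_value A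
  refine ⟨4 * K ^ 2 * (2 * A) ^ (4 * m + 2),
    mul_pos (by nlinarith) (pow_pos (by linarith) _), ?_⟩
  intro h hh z
  obtain ⟨hh0, hh1⟩ := hh
  rcases eq_or_lt_of_le hh0 with hz0 | hpos
  · subst hz0
    simp [gFun]
  -- now 0 < h
  set M : ℝ := A * (1 + |z|) with hMdef
  have habs : 0 ≤ |z| := abs_nonneg z
  have hM1 : 1 ≤ M := by nlinarith
  have hM0 : (0:ℝ) ≤ M := by linarith
  have hΦM : ∀ s ∈ Set.Icc (0:ℝ) h, |Φ s z| ≤ M := by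
    intro s hs
    have h1 := hΦgrow h ⟨le_of_lt hpos, hh1⟩ z s hs
    have hexp : Real.exp ((2 * K + 1) * h / 2) ≤ Real.exp ((2 * K + 1) / 2) :=
      Real.exp_le_exp.mpr (by nlinarith)
    have hK0 : (0:ℝ) < K := by linarith
    calc |Φ s z| ≤ K * Real.exp ((2 * K + 1) * h / 2) * (1 + |z|) := h1
      _ ≤ K * Real.exp ((2 * K + 1) / 2) * (1 + |z|) :=
          mul_le_mul_of_nonneg_right
            (mul_le_mul_of_nonneg_left hexp (by linarith)) (by linarith)
      _ = M := by rw [hMdef, hAdef]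
  have hzM : |z| ≤ M := by
    have := hΦM 0 ⟨le_refl 0, le_of_lt hpos⟩
    rwa [hΦ0] at this
  clear_value M
  set S : ℝ := K * (1 + M ^ (2 * m + 1)) with hSdef
  set L : ℝ := K * (1 + M ^ (2 * m)) with hLdef
  have hMp1 : (0:ℝ) ≤ M ^ (2 * m + 1) := pow_nonneg hM0 _
  have hMp0 : (0:ℝ) ≤ M ^ (2 * m) := pow_nonneg hM0 _
  have hS0 : 0 ≤ S := by nlinarith
  have hL0 : 0 ≤ L := by nlinarith
  clear_value S L
  -- bound on |f (Φ s z)|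
  have hfb : ∀ s ∈ Set.Icc (0:ℝ) h, |f (Φ s z)| ≤ S := by
    intro s hs
    have h1 := hgrow (Φ s z)
    have h2 : |Φ s z| ^ (2 * m + 1) ≤ M ^ (2 * m + 1) :=
      pow_le_pow_left₀ (abs_nonneg _) (hΦM s hs) _
    calc |f (Φ s z)| ≤ K * (1 + |Φ s z| ^ (2 * m + 1)) := h1
      _ ≤ S := by rw [hSdef]; nlinarith
  -- Step A : |Φ s z - z| ≤ S * s
  have hIcc : Set.Icc (0:ℝ) h ⊆ Set.Icc (0:ℝ) 1 := Set.Icc_subset_Icc le_rfl hh1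
  have hstepA : ∀ s ∈ Set.Icc (0:ℝ) h, |Φ s z - z| ≤ S * s := by
    intro s hs
    have key := Convex.norm_image_sub_le_of_norm_hasDerivWithin_le
      (f := fun t => Φ t z) (f' := fun t => f (Φ t z)) (s := Set.Icc (0:ℝ) h)
      (fun t ht => (hflow z t (hIcc ht)).hasDerivWithinAt)
      (fun t ht => by simpa [Real.norm_eq_abs] using hfb t ht)
      (convex_Icc 0 h) ⟨le_refl 0, le_of_lt hpos⟩ hs
    simp only [hΦ0, Real.norm_eq_abs, sub_zero] at key
    rwa [abs_of_nonneg hs.1] at key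
  -- Step B : local Lipschitz bound for f
  have hlip : ∀ a b : ℝ, |a| ≤ M → |b| ≤ M → |f a - f b| ≤ L * |a - b| := by
    intro a b ha hb
    have key := Convex.norm_image_sub_le_of_norm_hasDerivWithin_le
      (f := f) (f' := deriv f) (s := Set.Icc (-M) M)
      (fun x _ => (hf x).hasDerivAt.hasDerivWithinAt)
      (fun x hx => by
        have h1 := hgrow' x
        have hxM : |x| ≤ M := abs_le.mpr ⟨hx.1, hx.2⟩
        have h2 : |x| ^ (2 * m) ≤ M ^ (2 * m) := pow_le_pow_left₀ (abs_nonneg _) hxM _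
        calc ‖deriv f x‖ = |deriv f x| := rfl
          _ ≤ K * (1 + |x| ^ (2 * m)) := h1
          _ ≤ L := by rw [hLdef]; nlinarith)
      (convex_Icc (-M) M)
      (abs_le.mp hb |> fun p => ⟨p.1, p.2⟩)
      (abs_le.mp ha |> fun p => ⟨p.1, p.2⟩)
    simpa [Real.norm_eq_abs] using key
  -- Step C : |Φ h z - z - h * f z| ≤ (L * S * h) * h
  have hstepC : |Φ h z - z - h * f z| ≤ L * S * h * h := by
    have key := Convex.norm_image_sub_le_of_norm_hasDerivWithin_le
      (f := fun t => Φ t z - t * f z) (f' := fun t => f (Φ t z) - f z)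
      (s := Set.Icc (0:ℝ) h)
      (fun t ht => ((hflow z t (hIcc ht)).sub
        (hasDerivAt_mul_const (f z))).hasDerivWithinAt)
      (fun t ht => by
        have h1 := hlip (Φ t z) z (hΦM t ht) hzM
        have h2 := hstepA t ht
        have h3 : S * t ≤ S * h := mul_le_mul_of_nonneg_left ht.2 hS0
        calc ‖f (Φ t z) - f z‖ = |f (Φ t z) - f z| := rfl
          _ ≤ L * |Φ t z - z| := h1
          _ ≤ L * (S * h) := by nlinarith [abs_nonneg (Φ t z - z)]
          _ = L * S * h := by ring)
      (convex_Icc 0 h) ⟨le_refl 0, le_of_lt hpos⟩ ⟨le_of_lt hpos, le_refl h⟩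
    simp only [hΦ0, Real.norm_eq_abs, sub_zero, zero_mul] at key
    have heq : Φ h z - h * f z - z = Φ h z - z - h * f z := by ring
    rw [heq, abs_of_pos hpos] at key
    exact key
  -- conclude
  have hgf : gFun f Φ h z - f z = (Φ h z - z - h * f z) / h := by
    rw [gFun, if_neg (ne_of_gt hpos)]
    field_simp
  rw [hgf, abs_div, abs_of_pos hpos, div_le_iff₀ hpos]
  have hLS : L * S ≤ 4 * K ^ 2 * (2 * A) ^ (4 * m + 2) * (1 + |z| ^ (4 * m + 2)) := by
    have hone2m : (1:ℝ) ≤ M ^ (2 * m) := by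
      calc (1:ℝ) = 1 ^ (2 * m) := (one_pow _).symm
        _ ≤ M ^ (2 * m) := pow_le_pow_left₀ zero_le_one hM1 _
    have hone2m1 : (1:ℝ) ≤ M ^ (2 * m + 1) := by
      calc (1:ℝ) = 1 ^ (2 * m + 1) := (one_pow _).symm
        _ ≤ M ^ (2 * m + 1) := pow_le_pow_left₀ zero_le_one hM1 _
    have hK0 : (0:ℝ) < K := by linarith
    have hprod : L * S ≤ (2 * K * M ^ (2 * m)) * (2 * K * M ^ (2 * m + 1)) := by
      rw [hLdef, hSdef]
      apply mul_le_mul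
      · nlinarith
      · nlinarith
      · nlinarith
      · nlinarith
    have hfinal : (2 * K * M ^ (2 * m)) * (2 * K * M ^ (2 * m + 1))
        = 4 * K ^ 2 * M ^ (4 * m + 1) := by
      rw [show 4 * m + 1 = (2 * m) + (2 * m + 1) by ring, pow_add]; ring
    have hpow12 : M ^ (4 * m + 1) ≤ M ^ (4 * m + 2) :=
      pow_le_pow_right₀ hM1 (by omega)
    have hzp := one_add_pow_le |z| habs (4 * m + 2)
    have hAp : (0:ℝ) ≤ A ^ (4 * m + 2) := pow_nonneg (le_of_lt hA0) _
    calc L * S ≤ 4 * K ^ 2 * M ^ (4 * m + 1) := by rw [← hfinal]; exact hprod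
      _ ≤ 4 * K ^ 2 * M ^ (4 * m + 2) := by nlinarith
      _ = 4 * K ^ 2 * (A ^ (4 * m + 2) * (1 + |z|) ^ (4 * m + 2)) := by
          rw [hMdef, mul_pow]
      _ ≤ 4 * K ^ 2 * (A ^ (4 * m + 2) * (2 ^ (4 * m + 2) * (1 + |z| ^ (4 * m + 2)))) :=
          mul_le_mul_of_nonneg_left (mul_le_mul_of_nonneg_left hzp hAp)
            (by nlinarith : (0:ℝ) ≤ 4 * K ^ 2)
      _ = 4 * K ^ 2 * (2 * A) ^ (4 * m + 2) * (1 + |z| ^ (4 * m + 2)) := by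
          rw [mul_pow]; ring
  calc |Φ h z - z - h * f z| ≤ L * S * h * h := hstepC
    _ ≤ 4 * K ^ 2 * (2 * A) ^ (4 * m + 2) * (1 + |z| ^ (4 * m + 2)) * h * h :=
        mul_le_mul_of_nonneg_right (mul_le_mul_of_nonneg_right hLS hh0) hh0
    _ = 4 * K ^ 2 * (2 * A) ^ (4 * m + 2) * h * (1 + |z| ^ (4 * m + 2)) * h := by ring
end

section
/- Let K ≥ 1, T > 0, M ∈ ℕ, h = T/M, and let Φ_h : ℝ → ℝ (extended pointwise to functions) be globally Lipschitz with constant e^{Kh/2} and satisfy |Φ_h(z) − z| ≤ h·K̃(1 + |z|^{2m̃+1}) for constants K̃, m̃. Let (P_h^N) be linear operators on L^∞(𝕋) with operator norm ≤ 1. Define R_0 = r_0 ∈ L^∞(𝕋) and R_{k+1} = P_h^N(Φ_h(R_k + o_k) − Φ_h(o_k)) + P_h^N(Φ_h(o_k) − o_k) for given functions o_k with sup_k ‖o_k‖_{L^∞} ≤ Q. Then sup_{0≤k≤M} ‖R_k‖_{L^∞} ≤ e^{KT/2}( ‖r_0‖_{L^∞} + T K̃ (1 + Q^{2m̃+1})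 ). -/
open BoundedContinuousFunction

theorem stmt15 (K Kt Q T : ℝ) (mt M : ℕ) (hK : 1 ≤ K) (hT : 0 < T) (hM : 0 < M)
    (h : ℝ) (hh : h = T / M)
    (Φ : ℝ → ℝ)
    (hlip : ∀ x y : ℝ, |Φ x - Φ y| ≤ Real.exp (K * h / 2) * |x - y|)
    (hgrow : ∀ z : ℝ, |Φ z - z| ≤ h * Kt * (1 + |z| ^ (2 * mt + 1)))
    (P : (AddCircle (1 : ℝ) →ᵇ ℝ) →L[ℝ] (AddCircle (1 : ℝ) →ᵇ ℝ)) (hP : ‖P‖ ≤ 1)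
    (Φc : (AddCircle (1 : ℝ) →ᵇ ℝ) → (AddCircle (1 : ℝ) →ᵇ ℝ))
    (hΦc : ∀ u x, Φc u x = Φ (u x))
    (o : ℕ → AddCircle (1 : ℝ) →ᵇ ℝ) (hQ : ∀ k, ‖o k‖ ≤ Q)
    (r0 : AddCircle (1 : ℝ) →ᵇ ℝ)
    (R : ℕ → AddCircle (1 : ℝ) →ᵇ ℝ) (hR0 : R 0 = r0)
    (hrec : ∀ k, R (k + 1) = P (Φc (R k + o k) - Φc (o k)) + P (Φc (o k) - o k)) :
    ∀ k ≤ M, ‖R k‖ ≤ Real.exp (K * T / 2) * (‖r0‖ + T * Kt * (1 + Q ^ (2 * mt + 1))) := by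
  have hQ0 : 0 ≤ Q := le_trans (norm_nonneg _) (hQ 0)
  have hM0 : (0 : ℝ) < (M : ℝ) := by exact_mod_cast hM
  have hh0 : 0 < h := by rw [hh]; positivity
  have hKt : 0 ≤ h * Kt := by
    have h0 := hgrow 0
    simp only [abs_zero, zero_pow (Nat.succ_ne_zero (2 * mt)), add_zero, mul_one] at h0
    exact le_trans (abs_nonneg _) h0
  set L : ℝ := Real.exp (K * h / 2) with hL
  set B : ℝ := h * Kt * (1 + Q ^ (2 * mt + 1)) with hB
  have hB0 : 0 ≤ B := mul_nonneg hKt (by positivity)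
  have hL1 : 1 ≤ L := Real.one_le_exp (by positivity)
  have hPle : ∀ v, ‖P v‖ ≤ ‖v‖ := fun v =>
    (P.le_opNorm v).trans (by nlinarith [norm_nonneg v])
  have hstep : ∀ k, ‖R (k + 1)‖ ≤ L * ‖R k‖ + B := by
    intro k
    rw [hrec k]
    have h1 : ‖Φc (R k + o k) - Φc (o k)‖ ≤ L * ‖R k‖ := by
      apply (BoundedContinuousFunction.norm_le (by positivity)).2
      intro x
      simp only [BoundedContinuousFunction.coe_sub, Pi.sub_apply, hΦc, Real.norm_eq_abs]
      calc |Φ ((R k + o k) x) - Φ (o k x)| ≤ L * |(R k + o k) x - o k x| := hlip _ _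
        _ = L * |R k x| := by
            simp [BoundedContinuousFunction.coe_add, Pi.add_apply]
        _ ≤ L * ‖R k‖ := by
            apply mul_le_mul_of_nonneg_left _ (le_trans zero_le_one hL1)
            exact (R k).norm_coe_le_norm x
    have h2 : ‖Φc (o k) - o k‖ ≤ B := by
      apply (BoundedContinuousFunction.norm_le hB0).2
      intro x
      simp only [BoundedContinuousFunction.coe_sub, Pi.sub_apply, hΦc, Real.norm_eq_abs]
      calc |Φ (o k x) - o k x| ≤ h * Kt * (1 + |o k x| ^ (2 * mt + 1)) := hgrow _
        _ ≤ B := by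
            apply mul_le_mul_of_nonneg_left _ hKt
            have hx : |o k x| ≤ Q := le_trans ((o k).norm_coe_le_norm x) (hQ k)
            have := pow_le_pow_left₀ (abs_nonneg (o k x)) hx (2 * mt + 1)
            linarith
    calc ‖P (Φc (R k + o k) - Φc (o k)) + P (Φc (o k) - o k)‖
        ≤ ‖P (Φc (R k + o k) - Φc (o k))‖ + ‖P (Φc (o k) - o k)‖ := norm_add_le _ _
      _ ≤ L * ‖R k‖ + B := by
          have := (hPle _).trans h1
          have := (hPle _).trans h2
          linarith
  have hmain : ∀ k, ‖R k‖ ≤ L ^ k * (‖r0‖ + k * B) := by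
    intro k
    induction k with
    | zero => simp [hR0]
    | succ n ih =>
      have hLn : (1 : ℝ) ≤ L ^ n := one_le_pow₀ hL1
      have h1 := hstep n
      have h2 : L * ‖R n‖ ≤ L * (L ^ n * (‖r0‖ + n * B)) :=
        mul_le_mul_of_nonneg_left ih (by linarith)
      have hLL : (1 : ℝ) ≤ L * L ^ n := by nlinarith
      have hps : L ^ (n + 1) = L * L ^ n := by ring
      have key : (1 : ℝ) * B ≤ L ^ (n + 1) * B :=
        mul_le_mul_of_nonneg_right (by rw [hps]; exact hLL) hB0
      push_cast
      calc ‖R (n + 1)‖ ≤ L * ‖R n‖ + B := h1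
        _ ≤ L * (L ^ n * (‖r0‖ + n * B)) + B := by linarith
        _ = L ^ (n + 1) * (‖r0‖ + n * B) + 1 * B := by rw [hps]; ring
        _ ≤ L ^ (n + 1) * (‖r0‖ + n * B) + L ^ (n + 1) * B := by linarith
        _ = L ^ (n + 1) * (‖r0‖ + (↑n + 1) * B) := by ring
  intro k hk
  have hLk : L ^ k ≤ L ^ M := pow_le_pow_right₀ hL1 hk
  have hkB : (k : ℝ) * B ≤ (M : ℝ) * B :=
    mul_le_mul_of_nonneg_right (by exact_mod_cast hk) hB0
  have hLM : L ^ M = Real.exp (K * T / 2) := by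
    rw [hL, ← Real.exp_nat_mul]
    congr 1
    rw [hh]; field_simp
  have hMB : (M : ℝ) * B = T * Kt * (1 + Q ^ (2 * mt + 1)) := by
    rw [hB, hh]; field_simp
  calc ‖R k‖ ≤ L ^ k * (‖r0‖ + k * B) := hmain k
    _ ≤ L ^ M * (‖r0‖ + M * B) := by
        apply mul_le_mul hLk (by linarith) (by positivity) (by positivity)
    _ = _ := by rw [hLM, hMB]
end
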